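/- arXiv:0801.3790 — 2 statements merged into one kernel-verified Lean document; each statement's English description precedes it below -/
import Mathlib

section
/- Let P'(G,w) = { y ∈ ℝ^E : y ≥ 0, flow conservation at every vertex, ∑_e w_e y_e = 0, ∑_e y_e = 1 }. If y is a vertex of P'(G,w), then there do not exist three distinct simple directed cycles C₁, C₂, C₃ with w(C₁) < 0, w(C₂) > 0, and C₁ ∪ C₂ ∪ C₃ contained in the support { e : y_e > 0 } of y. -/
open Finset

/-- A simple directed cycle, identified with its arc set: the arcs
`(f i, f (i+1))` of an injective map `f : ZMod (n+1) → V`. -/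
def IsCycle {V : Type} [DecidableEq V] (C : Finset (V × V)) : Prop :=
  ∃ (n : ℕ) (f : ZMod (n + 1) → V), Function.Injective f ∧
    C = Finset.image (fun i => (f i, f (i + 1))) Finset.univ

/-- Characteristic vector of an arc set. -/
def chi {V : Type} [DecidableEq V] (C : Finset (V × V)) : V × V → ℝ :=
  fun e => if e ∈ C then 1 else 0

/-- Membership in the polyhedron `P(G,w)` of negative-weight flows:
nonnegativity, support in `E`, flow conservation at every vertex, and
total weight `-1`. -/
def memP {V : Type} [Fintype V] [DecidableEq V] (E : Finset (V × V))
    (w : V × V → ℝ) (y : V × V → ℝ) : Prop :=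
  (∀ e, 0 ≤ y e) ∧ (∀ e, e ∉ E → y e = 0) ∧
  (∀ u : V, ∑ e ∈ E.filter (fun e => e.1 = u), y e
          = ∑ e ∈ E.filter (fun e => e.2 = u), y e) ∧
  (∑ e ∈ E, w e * y e = -1)

/-- A vertex (extreme point) of a convex set: a member which is not a proper
convex combination of two distinct members. -/
def IsVertexOf {α : Type*} [AddCommGroup α] [Module ℝ α] (P : Set α) (y : α) : Prop :=
  y ∈ P ∧ ¬ ∃ y₁ ∈ P, ∃ y₂ ∈ P, y₁ ≠ y₂ ∧
    ∃ t : ℝ, 0 < t ∧ t < 1 ∧ y = t • y₁ + (1 - t) • y₂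

/-- Membership in the polytope `P'(G,w)`: nonnegativity, support in `E`, flow
conservation, total weight `0`, and normalization `∑ y = 1`. -/
def memP' {V : Type} [Fintype V] [DecidableEq V] (E : Finset (V × V))
    (w : V × V → ℝ) (y : V × V → ℝ) : Prop :=
  (∀ e, 0 ≤ y e) ∧ (∀ e, e ∉ E → y e = 0) ∧
  (∀ u : V, ∑ e ∈ E.filter (fun e => e.1 = u), y e
          = ∑ e ∈ E.filter (fun e => e.2 = u), y e) ∧
  (∑ e ∈ E, w e * y e = 0) ∧ (∑ e ∈ E, y e = 1)

/-!
The characteristic vectors `χ₁, χ₂, χ₃` of the cycles are circulations, and since no cycle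
contains another, `a χ₁ + b χ₂ + c χ₃ = 0` forces `c = 0`. Hence some nonzero combination
`z = a χ₁ + b χ₂ + c χ₃` satisfies both `∑ w z = 0` and `∑ z = 0`: take `(a, b, c)` to be the
cross product of `(w(C₁), w(C₂), w(C₃))` and `(|C₁|, |C₂|, |C₃|)`, whose last entry
`w(C₁)|C₂| - w(C₂)|C₁|` is negative. Since `z` lives on the support of `y`, both `y ± ε z`
lie in `P'(G,w)` for small `ε > 0`, so `y` is not a vertex.
-/

open Filter Topology

namespace IsCycle

variable {V : Type} [DecidableEq V] {C D : Finset (V × V)}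

theorem nonempty (hC : IsCycle C) : C.Nonempty := by
  obtain ⟨n, f, -, rfl⟩ := hC
  exact image_nonempty.2 univ_nonempty

theorem exists_mem_of_mem (hC : IsCycle C) {u v : V} (huv : (u, v) ∈ C) :
    ∃ x, (v, x) ∈ C := by
  obtain ⟨n, f, -, rfl⟩ := hC
  obtain ⟨i, -, hi⟩ := mem_image.1 huv
  obtain ⟨-, rfl⟩ := Prod.mk.inj hi
  exact ⟨f (i + 1 + 1), mem_image_of_mem _ (mem_univ (i + 1))⟩

theorem eq_of_mem_of_mem (hC : IsCycle C) {u v v' : V} (hv : (u, v) ∈ C) (hv' : (u, v') ∈ C) :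
    v = v' := by
  obtain ⟨n, f, hf, rfl⟩ := hC
  obtain ⟨i, -, hi⟩ := mem_image.1 hv
  obtain ⟨j, -, hj⟩ := mem_image.1 hv'
  obtain ⟨hiu, rfl⟩ := Prod.mk.inj hi
  obtain ⟨hju, rfl⟩ := Prod.mk.inj hj
  rw [hf (hiu.trans hju.symm)]

/-- Cycles are minimal: following the unique out-arcs of `D` from any arc of `C` stays in `C`
and runs through all of `D`. -/
theorem eq_of_subset (hC : IsCycle C) (hD : IsCycle D) (hCD : C ⊆ D) : C = D := by
  obtain ⟨n, f, -, rfl⟩ := id hD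
  refine subset_antisymm hCD ?_
  have step : ∀ i, (f i, f (i + 1)) ∈ C → (f (i + 1), f (i + 1 + 1)) ∈ C := by
    intro i hi
    obtain ⟨x, hx⟩ := hC.exists_mem_of_mem hi
    rwa [hD.eq_of_mem_of_mem (hCD hx) (mem_image_of_mem _ (mem_univ (i + 1)))] at hx
  obtain ⟨e₀, he₀⟩ := hC.nonempty
  obtain ⟨i₀, -, rfl⟩ := mem_image.1 (hCD he₀)
  have around : ∀ k : ℕ, (f (i₀ + k), f (i₀ + k + 1)) ∈ C := by
    intro k
    induction k with
    | zero => simpa using he₀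
    | succ k ih => simpa [add_assoc] using step _ ih
  rintro _ he
  obtain ⟨j, -, rfl⟩ := mem_image.1 he
  simpa using around (j - i₀).val

theorem card_filter_fst_eq_card_filter_snd (hC : IsCycle C) (u : V) :
    #(C.filter (·.1 = u)) = #(C.filter (·.2 = u)) := by
  obtain ⟨n, f, hf, rfl⟩ := hC
  have hg : Function.Injective (fun i : ZMod (n + 1) => (f i, f (i + 1))) :=
    fun i j hij => hf (congrArg Prod.fst hij)
  rw [filter_image, filter_image, card_image_of_injective _ hg, card_image_of_injective _ hg]
  refine card_bij' (fun i _ => i - 1) (fun j _ => j + 1) ?_ ?_ ?_ ?_ <;> simp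

end IsCycle

section Flows

variable {V : Type} [DecidableEq V]

def circulationSpace [Fintype V] (E : Finset (V × V)) : Submodule ℝ (V × V → ℝ) where
  carrier := {z | (∀ e, e ∉ E → z e = 0) ∧
    ∀ u : V, ∑ e ∈ E.filter (fun e => e.1 = u), z e = ∑ e ∈ E.filter (fun e => e.2 = u), z e}
  zero_mem' := by simp
  add_mem' := by
    rintro z z' ⟨hz, hzc⟩ ⟨hz', hzc'⟩
    refine ⟨fun e he => by simp [hz e he, hz' e he], fun u => ?_⟩
    simp only [Pi.add_apply, sum_add_distrib, hzc u, hzc' u]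
  smul_mem' := by
    rintro t z ⟨hz, hzc⟩
    refine ⟨fun e he => by simp [hz e he], fun u => ?_⟩
    simp only [Pi.smul_apply, smul_eq_mul, ← mul_sum, hzc u]

theorem sum_mul_chi {E C : Finset (V × V)} (hCE : C ⊆ E) (g : V × V → ℝ) :
    ∑ e ∈ E, g e * chi C e = ∑ e ∈ C, g e := by
  simp only [chi, mul_ite, mul_one, mul_zero]
  rw [sum_ite_mem, inter_eq_right.2 hCE]

theorem sum_filter_chi {E C : Finset (V × V)} (hCE : C ⊆ E) (p : V × V → Prop)
    [DecidablePred p] : ∑ e ∈ E.filter p, chi C e = #(C.filter p) := by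
  simp only [chi, sum_boole, filter_filter]
  congr 2
  ext e
  simp only [mem_filter]
  exact ⟨fun h => ⟨h.2.2, h.2.1⟩, fun h => ⟨hCE h.1, h.2, h.1⟩⟩

theorem IsCycle.chi_mem_circulationSpace [Fintype V] {E C : Finset (V × V)} (hC : IsCycle C)
    (hCE : C ⊆ E) : chi C ∈ circulationSpace E := by
  refine ⟨fun e he => if_neg fun heC => he (hCE heC), fun u => ?_⟩
  rw [sum_filter_chi hCE, sum_filter_chi hCE, hC.card_filter_fst_eq_card_filter_snd u]

/-- In a relation `a χ₁ + b χ₂ + c χ₃ = 0`, an arc of `C₁ \ C₂` forces `c = -a` and one of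
`C₁ \ C₃` forces `b = -a`; if `a ≠ 0` the relation then reads `χ₁ = χ₂ + χ₃`. -/
theorem eq_zero_of_smul_chi_add_eq_zero {C₁ C₂ C₃ : Finset (V × V)} {a b c : ℝ}
    (h₁₂ : ¬ C₁ ⊆ C₂) (h₁₃ : ¬ C₁ ⊆ C₃) (h₂₁ : ¬ C₂ ⊆ C₁)
    (h : a • chi C₁ + b • chi C₂ + c • chi C₃ = 0) : a = 0 := by
  have at_arc : ∀ e, a * chi C₁ e + b * chi C₂ e + c * chi C₃ e = 0 := fun e => by
    simpa using congrFun h e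
  by_contra ha
  obtain ⟨e, he₁, he₂⟩ := not_subset.1 h₁₂
  obtain ⟨f, hf₁, hf₃⟩ := not_subset.1 h₁₃
  obtain ⟨g, hg₂, hg₁⟩ := not_subset.1 h₂₁
  have hac : a + c = 0 := by
    have := at_arc e
    by_cases he₃ : e ∈ C₃ <;> simp_all [chi]
  have hab : a + b = 0 := by
    have := at_arc f
    by_cases hf₂ : f ∈ C₂ <;> simp_all [chi]
  have := at_arc g
  by_cases hg₃ : g ∈ C₃ <;> simp [chi, hg₁, hg₂, hg₃] at this <;> exact ha (by linarith)

theorem memP'_add [Fintype V] {E : Finset (V × V)} {w y z : V × V → ℝ} (hy : memP' E w y)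
    (hz : z ∈ circulationSpace E) (hzw : ∑ e ∈ E, w e * z e = 0) (hz₁ : ∑ e ∈ E, z e = 0)
    (hzy : ∀ e, |z e| ≤ y e) : memP' E w (y + z) := by
  obtain ⟨hy₀, hyE, hyc, hyw, hy₁⟩ := hy
  obtain ⟨hzE, hzc⟩ := hz
  refine ⟨fun e => ?_, fun e he => ?_, fun u => ?_, ?_, ?_⟩
  · linarith [neg_abs_le (z e), hzy e, Pi.add_apply y z e]
  · simp [hyE e he, hzE e he]
  · simp only [Pi.add_apply, sum_add_distrib, hyc u, hzc u]
  · simp only [Pi.add_apply, mul_add, sum_add_distrib, hyw, hzw, add_zero]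
  · simp only [Pi.add_apply, sum_add_distrib, hy₁, hz₁, add_zero]

end Flows

theorem not_isVertexOf_of_add_mem_of_sub_mem {α : Type*} [AddCommGroup α] [Module ℝ α]
    {P : Set α} {y z : α} (hz : z ≠ 0) (hadd : y + z ∈ P) (hsub : y - z ∈ P) :
    ¬ IsVertexOf P y := by
  rintro ⟨-, hy⟩
  refine hy ⟨y + z, hadd, y - z, hsub, fun h => hz ?_, 1 / 2, by norm_num, by norm_num, by module⟩
  have h2 : (2 : ℝ) • z = 0 := by rw [show (2 : ℝ) • z = (y + z) - (y - z) by module, h, sub_self]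
  exact (smul_eq_zero.1 h2).resolve_left two_ne_zero

theorem exists_pos_mul_abs_le {ι : Type*} [Finite ι] {y z : ι → ℝ} (hy : ∀ i, 0 ≤ y i)
    (hzy : ∀ i, z i ≠ 0 → 0 < y i) : ∃ ε > 0, ∀ i, ε * |z i| ≤ y i := by
  have small : ∀ i, ∀ᶠ ε in 𝓝 (0 : ℝ), ε * |z i| ≤ y i := by
    intro i
    by_cases hz : z i = 0
    · simp [hz, hy i]
    · have : Tendsto (fun ε : ℝ => ε * |z i|) (𝓝 0) (𝓝 0) := by
        simpa using (continuous_mul_const |z i|).tendsto 0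
      exact this.eventually (eventually_le_nhds (hzy i hz))
  obtain ⟨ε, hε, hεpos⟩ :=
    ((eventually_all.2 small).filter_mono nhdsWithin_le_nhds |>.and
      (self_mem_nhdsWithin : ∀ᶠ ε in 𝓝[>] (0 : ℝ), ε ∈ Set.Ioi 0)).exists
  exact ⟨ε, hεpos, hε⟩

theorem IsVertexOf.eq_zero_of_mem_circulationSpace {V : Type} [Fintype V] [DecidableEq V]
    {E : Finset (V × V)} {w y z : V × V → ℝ} (hv : IsVertexOf {x | memP' E w x} y)
    (hz : z ∈ circulationSpace E) (hzw : ∑ e ∈ E, w e * z e = 0) (hz₁ : ∑ e ∈ E, z e = 0)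
    (hzy : ∀ e, z e ≠ 0 → 0 < y e) : z = 0 := by
  by_contra hz₀
  obtain ⟨ε, hε, hεz⟩ := exists_pos_mul_abs_le hv.1.1 hzy
  have perturb : ∀ s : ℝ, |s| = ε → memP' E w (y + s • z) := fun s hs =>
    memP'_add hv.1 (Submodule.smul_mem _ s hz)
      (by simp [mul_left_comm _ s, ← mul_sum, hzw]) (by simp [← mul_sum, hz₁])
      (fun e => by simpa [abs_mul, hs] using hεz e)
  refine not_isVertexOf_of_add_mem_of_sub_mem (smul_ne_zero hε.ne' hz₀)
    (perturb ε (abs_of_pos hε)) ?_ hv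
  simpa [sub_eq_add_neg] using perturb (-ε) (by simp [abs_of_pos hε])

theorem exists_balanced_circulation_of_cycles {V : Type} [Fintype V] [DecidableEq V]
    {E C₁ C₂ C₃ : Finset (V × V)} {w : V × V → ℝ} (h₁ : IsCycle C₁) (h₂ : IsCycle C₂)
    (h₃ : IsCycle C₃) (h₁₃ : C₁ ≠ C₃) (h₂₃ : C₂ ≠ C₃) (hE₁ : C₁ ⊆ E) (hE₂ : C₂ ⊆ E)
    (hE₃ : C₃ ⊆ E) (hw₁ : ∑ e ∈ C₁, w e < 0) (hw₂ : 0 < ∑ e ∈ C₂, w e) :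
    ∃ z ∈ circulationSpace E, z ≠ 0 ∧ ∑ e ∈ E, w e * z e = 0 ∧ ∑ e ∈ E, z e = 0 ∧
      ∀ e, z e ≠ 0 → e ∈ C₁ ∪ C₂ ∪ C₃ := by
  set W₁ := ∑ e ∈ C₁, w e
  set W₂ := ∑ e ∈ C₂, w e
  set W₃ := ∑ e ∈ C₃, w e
  set N₁ : ℝ := (C₁.card : ℝ)
  set N₂ : ℝ := (C₂.card : ℝ)
  set N₃ : ℝ := (C₃.card : ℝ)
  have hc : W₁ * N₂ - W₂ * N₁ < 0 := by
    have : (0 : ℝ) < N₁ := Nat.cast_pos.2 h₁.nonempty.card_pos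
    have : (0 : ℝ) < N₂ := Nat.cast_pos.2 h₂.nonempty.card_pos
    nlinarith
  set z := (W₂ * N₃ - W₃ * N₂) • chi C₁ + (W₃ * N₁ - W₁ * N₃) • chi C₂
    + (W₁ * N₂ - W₂ * N₁) • chi C₃ with hz
  have sum_mul_z : ∀ g : V × V → ℝ, ∑ e ∈ E, g e * z e = (W₂ * N₃ - W₃ * N₂) * ∑ e ∈ C₁, g e
      + (W₃ * N₁ - W₁ * N₃) * ∑ e ∈ C₂, g e + (W₁ * N₂ - W₂ * N₁) * ∑ e ∈ C₃, g e := fun g => by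
    simp only [hz, Pi.add_apply, Pi.smul_apply, smul_eq_mul, mul_add, sum_add_distrib,
      mul_left_comm (g _), ← mul_sum, sum_mul_chi hE₁, sum_mul_chi hE₂, sum_mul_chi hE₃]
  refine ⟨z, add_mem (add_mem (Submodule.smul_mem _ _ (h₁.chi_mem_circulationSpace hE₁))
      (Submodule.smul_mem _ _ (h₂.chi_mem_circulationSpace hE₂)))
      (Submodule.smul_mem _ _ (h₃.chi_mem_circulationSpace hE₃)), fun hz₀ => ?_,
    by rw [sum_mul_z]; ring, ?_, fun e he => by contrapose! he; simp_all [chi]⟩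
  · exact hc.ne (eq_zero_of_smul_chi_add_eq_zero (C₂ := C₁) (C₃ := C₂)
      (fun h => h₁₃ (h₃.eq_of_subset h₁ h).symm) (fun h => h₂₃ (h₃.eq_of_subset h₂ h).symm)
      (fun h => h₁₃ (h₁.eq_of_subset h₃ h)) (by rw [← hz₀, hz]; abel))
  · have h := sum_mul_z fun _ => 1
    simp only [one_mul, sum_const, nsmul_eq_mul, mul_one] at h
    rw [h]
    ring

/-- the support of a vertex of `P'(G,w)` does not contain three
distinct cycles `C₁, C₂, C₃` with `w(C₁) < 0` and `w(C₂) > 0`. -/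
theorem stmt_9 {V : Type} [Fintype V] [DecidableEq V]
    (E : Finset (V × V)) (w : V × V → ℝ) (y : V × V → ℝ)
    (hv : IsVertexOf {z | memP' E w z} y) :
    ¬ ∃ C₁ C₂ C₃ : Finset (V × V), IsCycle C₁ ∧ IsCycle C₂ ∧ IsCycle C₃ ∧
        C₁ ≠ C₂ ∧ C₁ ≠ C₃ ∧ C₂ ≠ C₃ ∧
        C₁ ⊆ E ∧ C₂ ⊆ E ∧ C₃ ⊆ E ∧
        (∑ e ∈ C₁, w e) < 0 ∧ 0 < (∑ e ∈ C₂, w e) ∧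
        ∀ e ∈ C₁ ∪ C₂ ∪ C₃, 0 < y e := by
  rintro ⟨C₁, C₂, C₃, h₁, h₂, h₃, -, h₁₃, h₂₃, hE₁, hE₂, hE₃, hw₁, hw₂, hy⟩
  obtain ⟨z, hz, hz₀, hzw, hz₁, hzC⟩ :=
    exists_balanced_circulation_of_cycles h₁ h₂ h₃ h₁₃ h₂₃ hE₁ hE₂ hE₃ hw₁ hw₂
  exact hz₀ (hv.eq_zero_of_mem_circulationSpace hz hzw hz₁ fun e he => hy e (hzC e he))
end

section
/- Let P'(G,w) = { y ∈ ℝ^E : y ≥ 0, flow conservation at every vertex, ∑_e w_e y_e = 0, ∑_e y_e = 1 }. If y is a vertex of P'(G,w), then the support of y does not contain two distinct simple directed cycles C₁, C₂ with w(C₁) = w(C₂) = 0. -/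
open Finset

/-!
If two distinct zero-weight cycles `C₁, C₂` lie in the support of `y`, then
`d = χ(C₁)/|C₁| - χ(C₂)/|C₂|` is a nonzero circulation of weight `0` and total mass `0` whose
support lies in that of `y`. Hence `y ± ε d ∈ P'(G,w)` for small `ε > 0`, and `y` is the
midpoint of two distinct points of `P'(G,w)`.
-/

open Filter Topology

theorem IsVertexOf.eq_zero_of_add_mem_of_sub_mem {α : Type*} [AddCommGroup α] [Module ℝ α]
    {P : Set α} {y d : α} (hy : IsVertexOf P y) (hadd : y + d ∈ P) (hsub : y - d ∈ P) : d = 0 := by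
  by_contra hd
  refine hy.2 ⟨y + d, hadd, y - d, hsub, fun h => hd ?_, 1 / 2, by norm_num, by norm_num, by module⟩
  have h2d : (2 : ℝ) • d = 0 := by rw [show (2 : ℝ) • d = (y + d) - (y - d) by module, h, sub_self]
  exact (smul_eq_zero.1 h2d).resolve_left two_ne_zero

theorem exists_pos_forall_abs_mul_le {ι : Type*} [Finite ι] {y d : ι → ℝ}
    (hy : ∀ i, 0 ≤ y i) (hd : ∀ i, d i ≠ 0 → 0 < y i) : ∃ ε > 0, ∀ i, |ε * d i| ≤ y i := by
  have hsmall : ∀ i, ∀ᶠ ε in 𝓝 (0 : ℝ), |ε * d i| ≤ y i := by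
    intro i
    by_cases hi : d i = 0
    · simp [hi, hy i]
    · have : Tendsto (fun ε : ℝ => |ε * d i|) (𝓝 0) (𝓝 0) := by
        simpa using ((continuous_id.mul continuous_const).abs.tendsto (0 : ℝ) :)
      exact this.eventually (Iic_mem_nhds (hd i hi))
  obtain ⟨ε, hε, hεpos⟩ := (((eventually_all.2 hsmall).filter_mono nhdsWithin_le_nhds).and
    (self_mem_nhdsWithin (s := Set.Ioi 0))).exists
  exact ⟨ε, hεpos, hε⟩

section Circulations

variable {V : Type} [DecidableEq V]

def circulations (E : Finset (V × V)) : Submodule ℝ (V × V → ℝ) where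
  carrier := {d | (∀ e, e ∉ E → d e = 0) ∧ ∀ u : V,
    ∑ e ∈ E.filter (fun e => e.1 = u), d e = ∑ e ∈ E.filter (fun e => e.2 = u), d e}
  zero_mem' := by simp
  add_mem' := by
    rintro d d' ⟨hd, hfd⟩ ⟨hd', hfd'⟩
    exact ⟨fun e he => by simp [hd e he, hd' e he],
      fun u => by simp only [Pi.add_apply, sum_add_distrib, hfd u, hfd' u]⟩
  smul_mem' := by
    rintro t d ⟨hd, hfd⟩
    exact ⟨fun e he => by simp [hd e he],
      fun u => by simp only [Pi.smul_apply, smul_eq_mul, ← mul_sum, hfd u]⟩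

theorem memP'_add_smul [Fintype V] {E : Finset (V × V)} {w y d : V × V → ℝ} (hy : memP' E w y)
    (hd : d ∈ circulations E) (hdw : ∑ e ∈ E, w e * d e = 0) (hds : ∑ e ∈ E, d e = 0)
    {t : ℝ} (hnn : ∀ e, 0 ≤ y e + t * d e) : memP' E w (y + t • d) := by
  obtain ⟨-, hysupp, hyflow, hyw, hys⟩ := hy
  obtain ⟨hdsupp, hdflow⟩ := hd
  refine ⟨hnn, fun e he => by simp [hysupp e he, hdsupp e he], fun u => ?_, ?_, ?_⟩
  · simp only [Pi.add_apply, Pi.smul_apply, smul_eq_mul, sum_add_distrib, ← mul_sum, hyflow u,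
      hdflow u]
  · simp only [Pi.add_apply, Pi.smul_apply, smul_eq_mul, mul_add, sum_add_distrib,
      mul_left_comm (w _) t, ← mul_sum, hyw, hdw, mul_zero, add_zero]
  · simp only [Pi.add_apply, Pi.smul_apply, smul_eq_mul, sum_add_distrib, ← mul_sum, hys, hds,
      mul_zero, add_zero]

theorem memP'_add_sub_smul [Fintype V] {E : Finset (V × V)} {w y d : V × V → ℝ}
    (hy : memP' E w y) (hd : d ∈ circulations E) (hdw : ∑ e ∈ E, w e * d e = 0)
    (hds : ∑ e ∈ E, d e = 0) {t : ℝ} (ht : ∀ e, |t * d e| ≤ y e) :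
    memP' E w (y + t • d) ∧ memP' E w (y - t • d) := by
  refine ⟨memP'_add_smul hy hd hdw hds fun e => ?_, ?_⟩
  · linarith [neg_abs_le (t * d e), ht e]
  · rw [sub_eq_add_neg, ← neg_smul]
    exact memP'_add_smul hy hd hdw hds fun e => by linarith [le_abs_self (t * d e), ht e]

noncomputable def normalizedChi (C : Finset (V × V)) : V × V → ℝ := (#C : ℝ)⁻¹ • chi C

theorem normalizedChi_eq_zero_iff {C : Finset (V × V)} {e : V × V} :
    normalizedChi C e = 0 ↔ e ∉ C := by
  by_cases he : e ∈ C
  · simp [normalizedChi, chi, he, (card_pos.2 ⟨e, he⟩).ne']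
  · simp [normalizedChi, chi, he]

theorem normalizedChi_injective : Function.Injective (normalizedChi (V := V)) := by
  intro C₁ C₂ h
  ext e
  rw [← not_iff_not, ← normalizedChi_eq_zero_iff, ← normalizedChi_eq_zero_iff, h]

theorem sum_mul_normalizedChi {E C : Finset (V × V)} (hCE : C ⊆ E) (g : V × V → ℝ) :
    ∑ e ∈ E, g e * normalizedChi C e = (#C : ℝ)⁻¹ * ∑ e ∈ C, g e := by
  simp only [normalizedChi, chi, Pi.smul_apply, smul_eq_mul, mul_ite, mul_one, mul_zero,
    ← sum_filter, mul_sum]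
  rw [filter_mem_eq_inter, inter_eq_right.2 hCE]
  exact sum_congr rfl fun e _ => mul_comm _ _

theorem sum_normalizedChi {E C : Finset (V × V)} (hCE : C ⊆ E) (hC : C.Nonempty) :
    ∑ e ∈ E, normalizedChi C e = 1 := by
  simpa [hC.ne_empty] using sum_mul_normalizedChi hCE 1

theorem IsCycle.card_filter_fst_eq_card_filter_snd_s10 {C : Finset (V × V)} (hC : IsCycle C) (u : V) :
    #(C.filter (fun e => e.1 = u)) = #(C.filter (fun e => e.2 = u)) := by
  obtain ⟨n, f, hf, rfl⟩ := hC
  have hinj : Function.Injective (fun i : ZMod (n + 1) => (f i, f (i + 1))) :=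
    fun i j hij => hf (congrArg Prod.fst hij)
  rw [filter_image, filter_image, card_image_of_injective _ hinj,
    card_image_of_injective _ hinj]
  -- the arc entering `f i` has index `i - 1`, the arc leaving it has index `i`
  refine card_bij' (fun i _ => i - 1) (fun j _ => j + 1) ?_ ?_ ?_ ?_ <;> simp

theorem IsCycle.nonempty_s10 {C : Finset (V × V)} (hC : IsCycle C) : C.Nonempty := by
  obtain ⟨n, f, -, rfl⟩ := hC
  exact univ_nonempty.image _

theorem IsCycle.normalizedChi_mem {C E : Finset (V × V)} (hC : IsCycle C) (hCE : C ⊆ E) :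
    normalizedChi C ∈ circulations E := by
  refine ⟨fun e he => ?_, fun u => ?_⟩
  · exact normalizedChi_eq_zero_iff.2 fun h => he (hCE h)
  · simp only [normalizedChi, chi, Pi.smul_apply, smul_eq_mul, ← mul_sum, sum_boole]
    rw [filter_comm, filter_mem_eq_inter, inter_eq_right.2 hCE, filter_comm, filter_mem_eq_inter,
      inter_eq_right.2 hCE, hC.card_filter_fst_eq_card_filter_snd_s10 u]

end Circulations

/-- the support of a vertex of `P'(G,w)` does not contain two
distinct zero-weight cycles. -/
theorem stmt_10 {V : Type} [Fintype V] [DecidableEq V]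
    (E : Finset (V × V)) (w : V × V → ℝ) (y : V × V → ℝ)
    (hv : IsVertexOf {z | memP' E w z} y) :
    ¬ ∃ C₁ C₂ : Finset (V × V), IsCycle C₁ ∧ IsCycle C₂ ∧ C₁ ≠ C₂ ∧
        C₁ ⊆ E ∧ C₂ ⊆ E ∧ (∑ e ∈ C₁, w e) = 0 ∧ (∑ e ∈ C₂, w e) = 0 ∧
        ∀ e ∈ C₁ ∪ C₂, 0 < y e := by
  rintro ⟨C₁, C₂, hC₁, hC₂, hne, hC₁E, hC₂E, hw₁, hw₂, hpos⟩
  set d := normalizedChi C₁ - normalizedChi C₂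
  have hd : d ∈ circulations E := sub_mem (hC₁.normalizedChi_mem hC₁E) (hC₂.normalizedChi_mem hC₂E)
  have hdw : ∑ e ∈ E, w e * d e = 0 := by
    simp [d, mul_sub, sum_sub_distrib, sum_mul_normalizedChi, hC₁E, hC₂E, hw₁, hw₂]
  have hds : ∑ e ∈ E, d e = 0 := by
    simp [d, sum_sub_distrib, sum_normalizedChi hC₁E hC₁.nonempty_s10,
      sum_normalizedChi hC₂E hC₂.nonempty_s10]
  have hsupp : ∀ e, d e ≠ 0 → 0 < y e := by
    intro e he
    refine hpos e (mem_union.2 ?_)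
    by_contra! h
    exact he (by simp [d, normalizedChi_eq_zero_iff.2 h.1, normalizedChi_eq_zero_iff.2 h.2])
  obtain ⟨ε, hε, hsmall⟩ := exists_pos_forall_abs_mul_le hv.1.1 hsupp
  obtain ⟨hadd, hsub⟩ := memP'_add_sub_smul hv.1 hd hdw hds hsmall
  have hεd : ε • d = 0 := hv.eq_zero_of_add_mem_of_sub_mem hadd hsub
  exact hne (normalizedChi_injective (sub_eq_zero.1 ((smul_eq_zero.1 hεd).resolve_left hε.ne')))
end
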